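/- arXiv:1512.05923 — 6 statements merged into one kernel-verified Lean document; each statement's English description precedes it below -/
import Mathlib

section
/- Let Λ be a set, Y a complex Hilbert space, Z a complex vector space, K : Λ → (Y →ₗ Z) a map into linear maps from Y to Z, and let S_K ⊆ Z denote the linear span of {K(α)ξ : α ∈ Λ, ξ ∈ Y}. Let L_α : S_K → Y, α ∈ Λ, be linear maps. Then the following are equivalent: (a) for every n ∈ ℕ, all α_1,…,α_n ∈ Λ and ξ_1,…,ξ_n ∈ Y, the double sum ∑_{j=1}^n ∑_{k=1}^n ⟨L_{α_k}(K(α_j)ξ_j), ξ_k⟩_Y is a nonnegative real number; (b) there exist a complex Hilbert space W and a map Φ : Λ → B(Y, W) such that L_β(K(α)ξ) = (Φ(β))†(Φ(α)ξ) for all α, β ∈ Λ and ξ ∈ Y. -/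
/-!
Set `G β α := L β ∘ K α`. Evaluating the double sums for one and two points and polarizing
(replace `x` by `I • x`) shows that `G` is Hermitian: `⟪G β α x, y⟫ = ⟪x, G α β y⟫`. So every
`G β α` has a formal adjoint and is bounded by the closed graph theorem, and `G` becomes a positive
semidefinite matrix of bounded operators. Moore's construction `RKHS.OfKernel` realizes such a
matrix as `(Φ β)† ∘ Φ α` with `Φ` the kernel functions. Conversely, for `G β α = (Φ β)† ∘ Φ α`
the double sum is `‖∑ j, Φ (α j) (ξ j)‖²`.
-/

open scoped InnerProductSpace ComplexOrder

universe u v w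

section RCLike

variable {𝕜 : Type*} [RCLike 𝕜] {Λ : Type u} {Y : Type v}
  [NormedAddCommGroup Y] [InnerProductSpace 𝕜 Y]

def IsPosSemidefKernel (G : Λ → Λ → Y →ₗ[𝕜] Y) : Prop :=
  ∀ (n : ℕ) (α : Fin n → Λ) (ξ : Fin n → Y), 0 ≤ ∑ j, ∑ k, ⟪G (α k) (α j) (ξ j), ξ k⟫_𝕜

theorem IsPosSemidefKernel.comp {Λ' : Type*} {G : Λ → Λ → Y →ₗ[𝕜] Y}
    (hG : IsPosSemidefKernel G) (f : Λ' → Λ) :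
    IsPosSemidefKernel fun β α => G (f β) (f α) :=
  fun n α ξ => hG n (f ∘ α) ξ

theorem IsPosSemidefKernel.finsupp_sum_nonneg {G : Λ → Λ → Y →ₗ[𝕜] Y}
    (hG : IsPosSemidefKernel G) (f : Λ →₀ Y) :
    0 ≤ f.sum fun α x => f.sum fun β y => ⟪G β α x, y⟫_𝕜 := by
  let e := f.support.equivFin.symm
  convert hG _ (fun i => e i) (fun i => f (e i)) using 1
  simp only [Finsupp.sum, ← Finset.sum_coe_sort f.support]
  rw [← e.sum_comp]
  refine Finset.sum_congr rfl fun j _ => ?_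
  rw [← e.sum_comp]

theorem isPosSemidefKernel_of_eq_adjoint_comp [CompleteSpace Y] {W : Type*}
    [NormedAddCommGroup W] [InnerProductSpace 𝕜 W] [CompleteSpace W]
    {G : Λ → Λ → Y →ₗ[𝕜] Y} (Φ : Λ → Y →L[𝕜] W)
    (hΦ : ∀ α β ξ, G β α ξ = ContinuousLinearMap.adjoint (Φ β) (Φ α ξ)) :
    IsPosSemidefKernel G := by
  intro n α ξ
  calc (0 : 𝕜) ≤ ⟪∑ j, Φ (α j) (ξ j), ∑ k, Φ (α k) (ξ k)⟫_𝕜 :=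
        LinearMap.isPositive_one.inner_nonneg_left _
    _ = _ := by
      rw [sum_inner]
      simp only [inner_sum, hΦ, ContinuousLinearMap.adjoint_inner_left]

theorem LinearMap.continuous_of_inner_map_eq_inner {E F : Type*}
    [NormedAddCommGroup E] [InnerProductSpace 𝕜 E] [CompleteSpace E]
    [NormedAddCommGroup F] [InnerProductSpace 𝕜 F] [CompleteSpace F]
    {T : E →ₗ[𝕜] F} (S : F → E) (h : ∀ x y, ⟪T x, y⟫_𝕜 = ⟪x, S y⟫_𝕜) : Continuous T := by
  refine T.continuous_of_seq_closed_graph fun u x y hu hTu => ?_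
  rw [← sub_eq_zero, ← inner_self_eq_zero (𝕜 := 𝕜)]
  have hlhs : ∀ k, ⟪T (u k) - T x, y - T x⟫_𝕜 = ⟪u k - x, S (y - T x)⟫_𝕜 := fun k => by
    rw [← T.map_sub, h]
  refine tendsto_nhds_unique ((hTu.sub_const _).inner tendsto_const_nhds) ?_
  simp_rw [Function.comp_apply, hlhs]
  rw [← inner_zero_left (S (y - T x))]
  refine Filter.Tendsto.inner ?_ tendsto_const_nhds
  rw [← sub_self x]
  exact hu.sub_const _

end RCLike

namespace IsPosSemidefKernel

variable {Λ : Type u} {Y : Type v} [NormedAddCommGroup Y] [InnerProductSpace ℂ Y]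
  {G : Λ → Λ → Y →ₗ[ℂ] Y}

theorem inner_map_eq_inner (hG : IsPosSemidefKernel G) (α β : Λ) (x y : Y) :
    ⟪G β α x, y⟫_ℂ = ⟪x, G α β y⟫_ℂ := by
  have him : ∀ x, (⟪G β α x, y⟫_ℂ - ⟪x, G α β y⟫_ℂ).im = 0 := by
    intro x
    have hdiag : ∀ γ z, (⟪G γ γ z, z⟫_ℂ).im = 0 := fun γ z => by
      simpa using ((Complex.nonneg_iff.mp (hG 1 ![γ] ![z])).2).symm
    have hpair := ((Complex.nonneg_iff.mp (hG 2 ![α, β] ![x, y])).2).symm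
    simp only [Fin.sum_univ_two, Matrix.cons_val_zero, Matrix.cons_val_one, Complex.add_im,
      hdiag] at hpair
    rw [← inner_conj_symm x, Complex.sub_im, Complex.conj_im]
    linarith
  have hI := him (Complex.I • x)
  rw [map_smul, inner_smul_left, inner_smul_left, ← mul_sub, Complex.mul_im] at hI
  simp only [Complex.I_re, Complex.I_im, Complex.conj_re, Complex.conj_im] at hI
  refine sub_eq_zero.mp (Complex.ext ?_ (him x))
  rw [Complex.zero_re]
  linarith

variable [CompleteSpace Y]

theorem continuous (hG : IsPosSemidefKernel G) (β α : Λ) : Continuous (G β α) :=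
  LinearMap.continuous_of_inner_map_eq_inner (G α β) (hG.inner_map_eq_inner α β)

def toMatrix (hG : IsPosSemidefKernel G) : Matrix Λ Λ (Y →L[ℂ] Y) :=
  .of fun β α => (⟨G β α, hG.continuous β α⟩ : Y →L[ℂ] Y)

theorem posSemidef_toMatrix (hG : IsPosSemidefKernel G) : hG.toMatrix.PosSemidef := by
  have h := (RKHS.posSemidef_tfae (K := hG.toMatrix)).out 0 2
  refine h.mpr ⟨Matrix.IsHermitian.ext fun β α => ?_, fun f => ?_⟩
  · rw [ContinuousLinearMap.star_eq_adjoint, eq_comm, ContinuousLinearMap.eq_adjoint_iff]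
    exact hG.inner_map_eq_inner α β
  · exact (Complex.nonneg_iff.mp (hG.finsupp_sum_nonneg f)).1

theorem exists_featureMap (hG : IsPosSemidefKernel G) :
    ∃ (W : Type (max u v)) (_ : NormedAddCommGroup W) (_ : InnerProductSpace ℂ W)
      (_ : CompleteSpace W) (Φ : Λ → Y →L[ℂ] W),
      ∀ α β ξ, G β α ξ = ContinuousLinearMap.adjoint (Φ β) (Φ α ξ) := by
  have : Fact hG.toMatrix.PosSemidef := ⟨hG.posSemidef_toMatrix⟩
  refine ⟨RKHS.OfKernel hG.toMatrix, inferInstance, inferInstance, inferInstance,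
    RKHS.kerFun (RKHS.OfKernel hG.toMatrix), fun α β ξ => ?_⟩
  rw [← ContinuousLinearMap.comp_apply, ← RKHS.kernel_apply, RKHS.OfKernel.kernel_ofKernel]
  rfl

end IsPosSemidefKernel

/-- Theorem 3.13. Let `K : Λ → (Y →ₗ Z)` and let `L α` be linear maps from
`S_K := span {K α ξ}` to `Y`. Then `K` is an operator reproducing kernel with respect to
`{L α}` (i.e. all the double sums `∑ j ∑ k ⟪L (α k) (K (α j) (ξ j)), ξ k⟫` are nonnegative
reals) if and only if there is a Hilbert space `W` and a feature map `Φ : Λ → B(Y, W)` with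
`L β (K α ξ) = (Φ β)† (Φ α ξ)`. -/
theorem statement4 {Λ : Type u} {Y : Type v} {Z : Type w}
    [NormedAddCommGroup Y] [InnerProductSpace ℂ Y] [CompleteSpace Y]
    [AddCommGroup Z] [Module ℂ Z]
    (K : Λ → Y →ₗ[ℂ] Z)
    (L : Λ → ↥(Submodule.span ℂ {z : Z | ∃ (α : Λ) (ξ : Y), z = K α ξ}) →ₗ[ℂ] Y) :
    (∀ (n : ℕ) (α : Fin n → Λ) (ξ : Fin n → Y),
        0 ≤ ∑ j, ∑ k,
          ⟪L (α k) ⟨K (α j) (ξ j), Submodule.subset_span ⟨α j, ξ j, rfl⟩⟩, ξ k⟫_ℂ)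
    ↔ ∃ (W : Type (max u v w)) (_ : NormedAddCommGroup W) (_ : InnerProductSpace ℂ W)
        (_ : CompleteSpace W) (Φ : Λ → Y →L[ℂ] W),
        ∀ (α β : Λ) (ξ : Y),
          L β ⟨K α ξ, Submodule.subset_span ⟨α, ξ, rfl⟩⟩
            = ContinuousLinearMap.adjoint (Φ β) (Φ α ξ) := by
  let G : Λ → Λ → Y →ₗ[ℂ] Y := fun β α =>
    L β ∘ₗ (K α).codRestrict _ fun ξ => Submodule.subset_span ⟨α, ξ, rfl⟩
  constructor
  · intro hG
    -- indexing by `ULift Λ` puts the feature space in the universe `max u v w`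
    obtain ⟨W, _, _, _, Φ, hΦ⟩ :=
      (IsPosSemidefKernel.comp (G := G) hG ULift.down.{w}).exists_featureMap
    exact ⟨W, _, _, _, fun α => Φ ⟨α⟩, fun α β ξ => hΦ ⟨α⟩ ⟨β⟩ ξ⟩
  · rintro ⟨W, _, _, _, Φ, hΦ⟩
    exact isPosSemidefKernel_of_eq_adjoint_comp (G := G) Φ hΦ
end

section
/- Let X and Λ be sets, Y and W complex Hilbert spaces, Φ : X → B(Y, W) a map with span{Φ(x)ξ : x ∈ X, ξ ∈ Y} dense in W, and Ψ : Λ → B(Y, W) a map with span{Ψ(α)ξ : α ∈ Λ, ξ ∈ Y} dense in W. Then: (i) the linear map J : W → (X → Y) defined by (Ju)(x) := (Φ(x))†u is injective, so the range H := J(W), equipped with the inner product ⟨Ju, Jv⟩_H := ⟨u, v⟩_W, is a well-defined Hilbert space of Y-valued functions on X; (ii) for each x ∈ X the point evaluation f ↦ f(x) is a bounded linear operator from H to Y with norm at most ‖Φ(x)‖, and these evaluations jointly separate points of H; (iii) the operators L_α : H → Y defined by L_α(Ju) := (Ψ(α))†u are well defined, bounded with norm at most ‖Ψ(α)‖, and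 jointly separating (L_α(f) = 0 for all α implies f = 0); and (iv) the map K(α)ξ := J(Ψ(α)ξ) satisfies the reproducing property ⟨L_α(f), ξ⟩_Y = ⟨f, K(α)ξ⟩_H for all f ∈ H, α ∈ Λ, ξ ∈ Y. -/
open scoped InnerProductSpace

namespace ContinuousLinearMap

variable {ι 𝕜 E F : Type*} [RCLike 𝕜]
  [NormedAddCommGroup E] [InnerProductSpace 𝕜 E] [CompleteSpace E]
  [NormedAddCommGroup F] [InnerProductSpace 𝕜 F] [CompleteSpace F]

theorem norm_adjoint_apply_le (T : E →L[𝕜] F) (u : F) : ‖adjoint T u‖ ≤ ‖T‖ * ‖u‖ :=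
  adjoint.norm_map T ▸ (adjoint T).le_opNorm u

/-- A vector killed by every `(T i)†` is orthogonal to every `T i ξ`, hence to their span,
which is dense. -/
theorem eq_zero_of_forall_adjoint_apply_eq_zero (T : ι → E →L[𝕜] F)
    (hT : Dense (Submodule.span 𝕜 {w : F | ∃ (i : ι) (ξ : E), w = T i ξ} : Set F))
    {u : F} (hu : ∀ i, adjoint (T i) u = 0) : u = 0 := by
  set K := Submodule.span 𝕜 {w : F | ∃ (i : ι) (ξ : E), w = T i ξ}
  have hK : K ≤ (𝕜 ∙ u)ᗮ := by
    refine Submodule.span_le.mpr ?_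
    rintro _ ⟨i, ξ, rfl⟩
    rw [SetLike.mem_coe, Submodule.mem_orthogonal_singleton_iff_inner_left,
      ← adjoint_inner_right, hu i, inner_zero_right]
  have hu_mem : u ∈ Kᗮ :=
    (Submodule.isOrtho_iff_le.mpr hK).ge (Submodule.mem_span_singleton_self u)
  rwa [Submodule.topologicalClosure_eq_top_iff.mp
    (Submodule.dense_iff_topologicalClosure_eq_top.mp hT), Submodule.mem_bot] at hu_mem

theorem injective_adjoint_apply_of_dense_span (T : ι → E →L[𝕜] F)
    (hT : Dense (Submodule.span 𝕜 {w : F | ∃ (i : ι) (ξ : E), w = T i ξ} : Set F)) :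
    Function.Injective fun (u : F) (i : ι) => adjoint (T i) u := by
  let J : F →ₗ[𝕜] ι → E := LinearMap.pi fun i => (adjoint (T i) : F →ₗ[𝕜] E)
  exact (injective_iff_map_eq_zero J).mpr fun u hu =>
    eq_zero_of_forall_adjoint_apply_eq_zero T hT fun i => congrFun hu i

end ContinuousLinearMap

open ContinuousLinearMap in
/-- sufficiency half of Theorem 4.4. Given feature maps
`Φ : X → B(Y, W)` and `Ψ : Λ → B(Y, W)` with dense spans, the map `J u := fun x => (Φ x)† u`
is injective (so `H := J(W)` with `⟪J u, J v⟫_H := ⟪u, v⟫_W` is a Hilbert space of `Y`-valued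
functions on `X`); point evaluations `f ↦ f x` are bounded by `‖Φ x‖` and jointly separating;
the operators `L α (J u) := (Ψ α)† u` are well defined, bounded by `‖Ψ α‖`, and jointly
separating; and the kernel `K α ξ = J (Ψ α ξ)` reproduces: `⟪L α f, ξ⟫_Y = ⟪f, K α ξ⟫_H`,
i.e. `⟪(Ψ α)† u, ξ⟫_Y = ⟪u, Ψ α ξ⟫_W`. -/
theorem statement6 {X Λ Y W : Type*}
    [NormedAddCommGroup Y] [InnerProductSpace ℂ Y] [CompleteSpace Y]
    [NormedAddCommGroup W] [InnerProductSpace ℂ W] [CompleteSpace W]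
    (Φ : X → Y →L[ℂ] W) (Ψ : Λ → Y →L[ℂ] W)
    (hΦ : Dense (↑(Submodule.span ℂ {w : W | ∃ (x : X) (ξ : Y), w = Φ x ξ}) : Set W))
    (hΨ : Dense (↑(Submodule.span ℂ {w : W | ∃ (α : Λ) (ξ : Y), w = Ψ α ξ}) : Set W)) :
    (Function.Injective fun (u : W) (x : X) => ContinuousLinearMap.adjoint (Φ x) u) ∧
    (∀ (x : X) (u : W), ‖ContinuousLinearMap.adjoint (Φ x) u‖ ≤ ‖Φ x‖ * ‖u‖) ∧
    (∀ u : W, (∀ x : X, ContinuousLinearMap.adjoint (Φ x) u = 0) → u = 0) ∧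
    (∀ (α : Λ) (u : W), ‖ContinuousLinearMap.adjoint (Ψ α) u‖ ≤ ‖Ψ α‖ * ‖u‖) ∧
    (∀ u : W, (∀ α : Λ, ContinuousLinearMap.adjoint (Ψ α) u = 0) → u = 0) ∧
    (∀ (u : W) (α : Λ) (ξ : Y),
      ⟪ContinuousLinearMap.adjoint (Ψ α) u, ξ⟫_ℂ = ⟪u, Ψ α ξ⟫_ℂ) :=
  ⟨injective_adjoint_apply_of_dense_span Φ hΦ,
    fun x => norm_adjoint_apply_le (Φ x),
    fun _ => eq_zero_of_forall_adjoint_apply_eq_zero Φ hΦ,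
    fun α => norm_adjoint_apply_le (Ψ α),
    fun _ => eq_zero_of_forall_adjoint_apply_eq_zero Ψ hΨ,
    fun u α ξ => adjoint_inner_left (Ψ α) ξ u⟩
end

section
/- Let X be a metric space, Λ a set, and Y, W complex Hilbert spaces. Let Φ : X → B(Y, W) be continuous (in operator norm) with span{Φ(x)ξ : x ∈ X, ξ ∈ Y} dense in W, and let Ψ : Λ → B(Y, W) have span{Ψ(α)ξ : α ∈ Λ, ξ ∈ Y} dense in W. For each compact subset Z of X, the closure in C(Z, Y) (supremum norm) of the linear span of the functions {x ↦ (Φ(x))†Ψ(α)ξ : α ∈ Λ, ξ ∈ Y} equals the closure in C(Z, Y) of the set of functions {x ↦ (Φ(x))†u : u ∈ W}. In particular, the operator reproducing kernel K(α)ξ := (Φ(·))†Ψ(α)ξ is universal (its kernel sections have dense span in C(Z, Y) for every compact Z) if and only if {x ↦ (Φ(x))†u : u ∈ W} is dense in C(Z, Y) for every compact Z. -/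
/-!
The map `T u := (z ↦ (Φ z)† u)` from `W` to `C(Z, Y)` is continuous and linear, so it carries
the dense subspace spanned by the vectors `Ψ α ξ` onto a subspace whose closure is the closure
of its whole range; the kernel sections `(Φ ·)† (Ψ α ξ)` are exactly the images `T (Ψ α ξ)`.
-/

namespace ContinuousMap

variable {Z 𝕜 E F : Type*} [TopologicalSpace Z] [NontriviallyNormedField 𝕜]
  [NormedAddCommGroup E] [NormedSpace 𝕜 E] [NormedAddCommGroup F] [NormedSpace 𝕜 F]

/-- Continuity refers to the compact-open topology of `C(Z, F)`, which is the topology of uniform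
convergence when `Z` is compact. -/
def clmApply (A : C(Z, E →L[𝕜] F)) : E →L[𝕜] C(Z, F) where
  toFun u := ⟨fun z => A z u, A.continuous.clm_apply continuous_const⟩
  map_add' u v := by ext z; simp
  map_smul' c u := by ext z; simp
  cont := continuous_of_continuous_uncurry _
    (A.continuous.snd'.clm_apply continuous_fst)

theorem range_clmApply (A : C(Z, E →L[𝕜] F)) :
    Set.range A.clmApply = {h : C(Z, F) | ∃ u : E, ∀ z : Z, h z = A z u} := by
  ext h
  constructor
  · rintro ⟨u, rfl⟩
    exact ⟨u, fun z => rfl⟩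
  · rintro ⟨u, hu⟩
    exact ⟨u, ext fun z => (hu z).symm⟩

end ContinuousMap

theorem ContinuousLinearMap.closure_span_image_eq_closure_range {R M N : Type*} [Semiring R]
    [AddCommMonoid M] [Module R M] [TopologicalSpace M]
    [AddCommMonoid N] [Module R N] [TopologicalSpace N]
    (T : M →L[R] N) {s : Set M} (hs : Dense (Submodule.span R s : Set M)) :
    closure (Submodule.span R (T '' s) : Set N) = closure (Set.range T) := by
  rw [← coe_coe T, Submodule.span_image, Submodule.map_coe, coe_coe,
    ← closure_image_closure T.continuous, hs.closure_eq, Set.image_univ]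

theorem statement8_general {X : Type*} [MetricSpace X] {Λ Y W : Type*}
    [NormedAddCommGroup Y] [InnerProductSpace ℂ Y] [CompleteSpace Y]
    [NormedAddCommGroup W] [InnerProductSpace ℂ W] [CompleteSpace W]
    (Φ : X → Y →L[ℂ] W) (hcont : Continuous Φ)
    (Ψ : Λ → Y →L[ℂ] W)
    (hΨ : Dense (↑(Submodule.span ℂ {w : W | ∃ (α : Λ) (ξ : Y), w = Ψ α ξ}) : Set W)) :
    (∀ Z : Set X, IsCompact Z →
      closure (↑(Submodule.span ℂ {h : C(Z, Y) | ∃ (α : Λ) (ξ : Y), ∀ z : Z,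
          h z = ContinuousLinearMap.adjoint (Φ ↑z) (Ψ α ξ)}) : Set C(Z, Y))
        = closure {h : C(Z, Y) | ∃ u : W, ∀ z : Z,
            h z = ContinuousLinearMap.adjoint (Φ ↑z) u}) ∧
    ((∀ Z : Set X, IsCompact Z →
        Dense (↑(Submodule.span ℂ {h : C(Z, Y) | ∃ (α : Λ) (ξ : Y), ∀ z : Z,
          h z = ContinuousLinearMap.adjoint (Φ ↑z) (Ψ α ξ)}) : Set C(Z, Y)))
      ↔ (∀ Z : Set X, IsCompact Z →
        Dense {h : C(Z, Y) | ∃ u : W, ∀ z : Z,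
          h z = ContinuousLinearMap.adjoint (Φ ↑z) u})) := by
  have closure_eq : ∀ Z : Set X, IsCompact Z →
      closure (↑(Submodule.span ℂ {h : C(Z, Y) | ∃ (α : Λ) (ξ : Y), ∀ z : Z,
          h z = ContinuousLinearMap.adjoint (Φ ↑z) (Ψ α ξ)}) : Set C(Z, Y))
        = closure {h : C(Z, Y) | ∃ u : W, ∀ z : Z,
            h z = ContinuousLinearMap.adjoint (Φ ↑z) u} := by
    intro Z _
    let A : C(Z, W →L[ℂ] Y) := ⟨fun z => ContinuousLinearMap.adjoint (Φ z),
      ContinuousLinearMap.adjoint.continuous.comp (hcont.comp continuous_subtype_val)⟩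
    have sections_eq : {h : C(Z, Y) | ∃ (α : Λ) (ξ : Y), ∀ z : Z,
        h z = ContinuousLinearMap.adjoint (Φ ↑z) (Ψ α ξ)} =
        A.clmApply '' {w : W | ∃ (α : Λ) (ξ : Y), w = Ψ α ξ} := by
      ext h
      constructor
      · rintro ⟨α, ξ, hh⟩
        exact ⟨Ψ α ξ, ⟨α, ξ, rfl⟩, ContinuousMap.ext fun z => (hh z).symm⟩
      · rintro ⟨_, ⟨α, ξ, rfl⟩, rfl⟩
        exact ⟨α, ξ, fun z => rfl⟩
    rw [sections_eq, A.clmApply.closure_span_image_eq_closure_range hΨ, A.range_clmApply]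
    rfl
  refine ⟨closure_eq, forall_congr' fun Z => forall_congr' fun hZ => ?_⟩
  simp only [dense_iff_closure_eq, closure_eq Z hZ]

/-- Theorem 4.10. Let `Φ : X → B(Y, W)` be continuous with dense span and
`Ψ : Λ → B(Y, W)` have dense span. For every compact `Z ⊆ X`, the closure in `C(Z, Y)` of the
span of the kernel sections `x ↦ (Φ x)† (Ψ α ξ)` equals the closure of
`{x ↦ (Φ x)† u : u ∈ W}`; in particular the kernel `K α ξ := (Φ ·)† (Ψ α ξ)` is universal
iff `{(Φ ·)† u : u ∈ W}` is dense in `C(Z, Y)` for every compact `Z`. -/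
theorem statement8 {X : Type*} [MetricSpace X] {Λ Y W : Type*}
    [NormedAddCommGroup Y] [InnerProductSpace ℂ Y] [CompleteSpace Y]
    [NormedAddCommGroup W] [InnerProductSpace ℂ W] [CompleteSpace W]
    (Φ : X → Y →L[ℂ] W) (hcont : Continuous Φ)
    (hΦ : Dense (↑(Submodule.span ℂ {w : W | ∃ (x : X) (ξ : Y), w = Φ x ξ}) : Set W))
    (Ψ : Λ → Y →L[ℂ] W)
    (hΨ : Dense (↑(Submodule.span ℂ {w : W | ∃ (α : Λ) (ξ : Y), w = Ψ α ξ}) : Set W)) :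
    (∀ Z : Set X, IsCompact Z →
      closure (↑(Submodule.span ℂ {h : C(Z, Y) | ∃ (α : Λ) (ξ : Y), ∀ z : Z,
          h z = ContinuousLinearMap.adjoint (Φ ↑z) (Ψ α ξ)}) : Set C(Z, Y))
        = closure {h : C(Z, Y) | ∃ u : W, ∀ z : Z,
            h z = ContinuousLinearMap.adjoint (Φ ↑z) u}) ∧
    ((∀ Z : Set X, IsCompact Z →
        Dense (↑(Submodule.span ℂ {h : C(Z, Y) | ∃ (α : Λ) (ξ : Y), ∀ z : Z,
          h z = ContinuousLinearMap.adjoint (Φ ↑z) (Ψ α ξ)}) : Set C(Z, Y)))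
      ↔ (∀ Z : Set X, IsCompact Z →
        Dense {h : C(Z, Y) | ∃ u : W, ∀ z : Z,
          h z = ContinuousLinearMap.adjoint (Φ ↑z) u})) :=
  statement8_general Φ hcont Ψ hΨ
end

section
/- Let X be a compact topological space, μ a finite Borel measure on X, and 𝒦 : X × X → ℂ a continuous function. Let {u_α : α ∈ Λ} ⊆ L¹(X, μ) be a family whose linear span is dense in L¹(X, μ). Then the following are equivalent: (a) for every n ∈ ℕ and all α_1, …, α_n ∈ Λ, the n×n matrix with entries F_{jk} := ∫_X ∫_X u_{α_j}(s) 𝒦(s, t) conj(u_{α_k}(t)) dμ(s) dμ(t) is Hermitian and positive semi-definite; (b) for every g ∈ L¹(X, μ), the number ∫_X ∫_X g(s) 𝒦(s, t) conj(g(t)) dμ(s) dμ(t) is a nonnegative real. -/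
/-!
Both conditions are statements about the sesquilinear form
`B f g = ∫∫ f(s) 𝒦(s,t) conj(g(t)) dμ(s) dμ(t)` on `L¹(μ)`, which is bounded because `𝒦` is, hence
jointly continuous. For `v = ∑ⱼ conj(xⱼ) u_{αⱼ}` one has `x* F x = B v v`, so (a) says exactly that
`B v v ≥ 0` on the span of the `u_α`: over `ℂ` a matrix with nonnegative quadratic form is
automatically Hermitian. Since `{g | 0 ≤ B g g}` is closed and the span is dense, this is (b).
-/

open MeasureTheory Matrix
open scoped ComplexOrder ENNReal InnerProductSpace

theorem Matrix.posSemidef_iff_forall_star_dotProduct_mulVec_nonneg {n : Type*} [Fintype n]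
    {M : Matrix n n ℂ} : M.PosSemidef ↔ ∀ x, 0 ≤ star x ⬝ᵥ (M *ᵥ x) := by
  classical
  refine ⟨fun h => h.dotProduct_mulVec_nonneg, fun h => ?_⟩
  rw [← isPositive_toEuclideanLin_iff, LinearMap.isPositive_iff_complex]
  intro x
  have hinner : ⟪x, M.toEuclideanLin x⟫_ℂ = star (WithLp.ofLp x) ⬝ᵥ (M *ᵥ WithLp.ofLp x) := by
    rw [EuclideanSpace.inner_eq_star_dotProduct, dotProduct_comm]; rfl
  have hpos := h (WithLp.ofLp x)
  have hreal : starRingEnd ℂ _ = _ := IsSelfAdjoint.of_nonneg hpos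
  rw [← inner_conj_symm, hinner, hreal]
  exact ⟨Complex.conj_eq_iff_re.mp hreal, (Complex.le_def.mp hpos).1⟩

namespace LinearMap

variable {M : Type*} [AddCommGroup M] [Module ℂ M] (B : M →ₗ[ℂ] M →ₗ⋆[ℂ] ℂ)

theorem star_dotProduct_mulVec_gram {ι : Type*} [Fintype ι] (v : ι → M) (x : ι → ℂ) :
    star x ⬝ᵥ (Matrix.of (fun j k => B (v j) (v k)) *ᵥ x) =
      B (∑ j, starRingEnd ℂ (x j) • v j) (∑ j, starRingEnd ℂ (x j) • v j) := by
  simp only [map_sum, map_smulₛₗ, sum_apply, smul_apply, smul_eq_mul, Complex.conj_conj,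
    RingHom.id_apply, dotProduct, mulVec, of_apply, Pi.star_apply, RCLike.star_def,
    Finset.mul_sum]
  rw [Finset.sum_comm]
  exact Finset.sum_congr rfl fun j _ => Finset.sum_congr rfl fun k _ => by ring

theorem forall_posSemidef_gram_iff {Λ : Type*} (v : Λ → M) :
    (∀ (n : ℕ) (α : Fin n → Λ), (Matrix.of fun j k => B (v (α j)) (v (α k))).PosSemidef) ↔
      ∀ x ∈ Submodule.span ℂ (Set.range v), 0 ≤ B x x := by
  simp_rw [posSemidef_iff_forall_star_dotProduct_mulVec_nonneg, star_dotProduct_mulVec_gram]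
  constructor
  · intro h x hx
    obtain ⟨n, c, w, rfl⟩ := Submodule.mem_span_set'.mp hx
    choose α hα using fun i => (w i).2
    simpa [hα] using h n α fun i => starRingEnd ℂ (c i)
  · intro h n α x
    exact h _ (Submodule.sum_mem _ fun j _ =>
      Submodule.smul_mem _ _ (Submodule.subset_span ⟨α j, rfl⟩))

end LinearMap

section IntegralOperator

variable {X Y : Type*} [TopologicalSpace X] [CompactSpace X] [TopologicalSpace Y] [CompactSpace Y]
  [MeasurableSpace Y] [BorelSpace Y] (ν : Measure Y) [IsFiniteMeasure ν]

noncomputable def integralPairing : Lp ℂ 1 ν →L[ℂ] C(Y, ℂ) →L[ℂ] ℂ :=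
  ((ContinuousLinearMap.mul ℂ ℂ).lpPairing ν 1 ∞).bilinearComp (.id ℂ _)
    (ContinuousMap.toLp ∞ ν ℂ)

theorem integralPairing_apply (g : Lp ℂ 1 ν) (φ : C(Y, ℂ)) :
    integralPairing ν g φ = ∫ t, g t * φ t ∂ν := by
  simp only [integralPairing, ContinuousLinearMap.bilinearComp_apply,
    ContinuousLinearMap.id_apply, ContinuousLinearMap.lpPairing_eq_integral]
  refine integral_congr_ae ?_
  filter_upwards [ContinuousMap.coeFn_toLp (p := ∞) (μ := ν) (𝕜 := ℂ) φ] with t ht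
  rw [ContinuousLinearMap.mul_apply', ht]

noncomputable def integralOperator (K : C(X × Y, ℂ)) : Lp ℂ 1 ν →L[ℂ] C(X, ℂ) :=
  LinearMap.mkContinuous
    { toFun g := ContinuousMap.comp ⟨integralPairing ν g, (integralPairing ν g).continuous⟩ K.curry
      map_add' g g' := by ext; simp
      map_smul' c g := by ext; simp }
    (‖integralPairing ν‖ * ‖K‖) fun g => by
      refine (ContinuousMap.norm_le _ (by positivity)).2 fun s => ?_
      calc ‖integralPairing ν g (K.curry s)‖
          ≤ ‖integralPairing ν‖ * ‖g‖ * ‖K.curry s‖ := (integralPairing ν).le_opNorm₂ g _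
        _ ≤ ‖integralPairing ν‖ * ‖K‖ * ‖g‖ := by
          rw [mul_right_comm]
          gcongr
          exact (ContinuousMap.norm_le _ (norm_nonneg K)).2 fun t => K.norm_coe_le_norm (s, t)

theorem integralOperator_apply (K : C(X × Y, ℂ)) (g : Lp ℂ 1 ν) (s : X) :
    integralOperator ν K g s = ∫ t, g t * K (s, t) ∂ν :=
  integralPairing_apply ν g (K.curry s)

end IntegralOperator

section KernelForm

variable {X Y : Type*} [TopologicalSpace X] [CompactSpace X] [MeasurableSpace X] [BorelSpace X]
  (μ : Measure X) [IsFiniteMeasure μ] [TopologicalSpace Y] [CompactSpace Y] [MeasurableSpace Y]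
  [BorelSpace Y] (ν : Measure Y) [IsFiniteMeasure ν]

noncomputable def kernelForm (K : C(X × Y, ℂ)) : Lp ℂ 1 μ →L[ℂ] Lp ℂ 1 ν →L⋆[ℂ] ℂ :=
  (integralPairing μ).bilinearComp (.id ℂ _)
    ((starL ℂ).toContinuousLinearMap.comp (integralOperator ν (star K)))

theorem kernelForm_apply_eq_integralPairing (K : C(X × Y, ℂ)) (f : Lp ℂ 1 μ) (g : Lp ℂ 1 ν) :
    kernelForm μ ν K f g = integralPairing μ f (star (integralOperator ν (star K) g)) := by
  simp only [kernelForm, ContinuousLinearMap.bilinearComp_apply, ContinuousLinearMap.id_apply,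
    ContinuousLinearMap.comp_apply, ContinuousLinearEquiv.coe_coe, starL_apply]

theorem kernelForm_apply (K : C(X × Y, ℂ)) (f : Lp ℂ 1 μ) (g : Lp ℂ 1 ν) :
    kernelForm μ ν K f g = ∫ s, ∫ t, f s * K (s, t) * starRingEnd ℂ (g t) ∂ν ∂μ := by
  rw [kernelForm_apply_eq_integralPairing, integralPairing_apply]
  refine integral_congr_ae (Filter.Eventually.of_forall fun s => ?_)
  simp only [ContinuousMap.star_apply, integralOperator_apply, Complex.star_def, ← integral_conj,
    ← integral_const_mul, map_mul, Complex.conj_conj]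
  exact integral_congr_ae (Filter.Eventually.of_forall fun t => by ring)

theorem continuous_kernelForm (K : C(X × Y, ℂ)) :
    Continuous fun p : Lp ℂ 1 μ × Lp ℂ 1 ν => kernelForm μ ν K p.1 p.2 := by
  simp only [kernelForm_apply_eq_integralPairing]
  have hconj : Continuous fun g : Lp ℂ 1 ν => star (integralOperator ν (star K) g) :=
    continuous_star.comp (integralOperator ν (star K)).continuous
  exact (integralPairing μ).continuous₂.comp₂ continuous_fst (hconj.comp continuous_snd)

end KernelForm

/-- Proposition 5.7. Let `X` be compact, `μ` a finite Borel measure,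
`𝒦 : X × X → ℂ` continuous, and `{u_α} ⊆ L¹(X, μ)` with dense span. Then all the matrices
`[∫∫ u_{α_j}(s) 𝒦(s,t) conj(u_{α_k}(t)) dμ dμ]` are Hermitian positive semi-definite if and
only if `∫∫ g(s) 𝒦(s,t) conj(g(t)) dμ dμ ≥ 0` for every `g ∈ L¹(X, μ)`. -/
theorem statement12 {X : Type*} [TopologicalSpace X] [CompactSpace X]
    [MeasurableSpace X] [BorelSpace X] (μ : Measure X) [IsFiniteMeasure μ]
    (𝒦 : X → X → ℂ) (h𝒦 : Continuous fun p : X × X => 𝒦 p.1 p.2)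
    {Λ : Type*} (u : Λ → Lp ℂ 1 μ)
    (hdense : Dense (↑(Submodule.span ℂ (Set.range u)) : Set (Lp ℂ 1 μ))) :
    (∀ (n : ℕ) (α : Fin n → Λ),
      (Matrix.of fun j k : Fin n =>
        ∫ s, ∫ t, u (α j) s * 𝒦 s t * (starRingEnd ℂ) (u (α k) t) ∂μ ∂μ).PosSemidef)
    ↔ ∀ g : Lp ℂ 1 μ,
        0 ≤ ∫ s, ∫ t, g s * 𝒦 s t * (starRingEnd ℂ) (g t) ∂μ ∂μ := by
  let K : C(X × X, ℂ) := ⟨fun p => 𝒦 p.1 p.2, h𝒦⟩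
  set B := kernelForm μ μ K
  have hB : ∀ f g : Lp ℂ 1 μ, ∫ s, ∫ t, f s * 𝒦 s t * starRingEnd ℂ (g t) ∂μ ∂μ = B f g :=
    fun f g => (kernelForm_apply μ μ K f g).symm
  have hclosed : IsClosed {g : Lp ℂ 1 μ | 0 ≤ B g g} :=
    isClosed_le continuous_const
      ((continuous_kernelForm μ μ K).comp (continuous_id.prodMk continuous_id) :)
  simp only [hB]
  refine (B.toLinearMap₁₂.forall_posSemidef_gram_iff u).trans ⟨fun h g => ?_, fun h g _ => h g⟩
  exact hdense.induction h hclosed g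
end

section
/- Let n ≥ 1 and write each j ∈ ℤ uniquely as j = nm + l with m ∈ ℤ and l ∈ {0, …, n−1}. Let (x_j)_{j∈ℤ} be real numbers such that for each l ∈ {0, …, n−1} the family of functions (t ↦ (2π)^{−1/2} e^{i x_{nm+l} t})_{m∈ℤ} is a frame for L²([−π, π]). Let η_0, …, η_{n−1} ∈ ℂⁿ be the columns of a unitary n×n matrix, and set ξ_{nm+l} := η_l for all m ∈ ℤ, l ∈ {0, …, n−1}. Define Φ(x, ξ) ∈ L²([−π, π], ℂⁿ) by Φ(x, ξ)(t) := (2π)^{−1/2} e^{i x t} ξ. Then (Φ(x_j, ξ_j))_{j∈ℤ} is a frame for L²([−π, π], ℂⁿ). Moreover, if for each l the family ((2π)^{−1/2} e^{i x_{nm+l} (·)})_{m∈ℤ} is additionally ℓ²-independent (for every square-summable (c_m), summability of ∑_m c_m e^{i x_{nm+l}(·)} to 0 in L²([−π,π]) implies c = 0), then (Φ(x_j, ξ_j))_{j∈ℤ} is also ℓ²-independent, i.e., it is a Riesz basis for L²([−π, π], ℂⁿ). -/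
/-!
The coefficient maps `f ↦ ⟪η l, f⟫` of the orthonormal basis `η` split `L²([-π, π], ℂⁿ)`
isometrically into `n` copies of `L²([-π, π])`, and `Φ(x_{nm+l}, η_l)` is the copy of the
scalar exponential `E m l` in the `l`-th one, so `⟪f, Φ(x_{nm+l}, η_l)⟫ = ⟪⟪η_l, f⟫, E m l⟫`.
Summing the `n` scalar frame inequalities (with the smallest lower and the largest upper bound)
gives the frame inequality for `Φ`. Applying the `l`-th coefficient map to a vanishing expansion
`∑ c_j Φ_j` kills every summand outside the `l`-th copy, so `ℓ²`-independence passes to `Φ` too.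
-/

open MeasureTheory
open scoped InnerProductSpace

/-- Lebesgue measure restricted to `[-π, π]`. -/
noncomputable def muPi : Measure ℝ := volume.restrict (Set.Icc (-Real.pi) Real.pi)

/-- A family `v : J → H` in a complex inner product space is a frame with bounds
`0 < A ≤ B` if for every `f` the sum `∑ j, ‖⟪f, v j⟫‖²` converges to some `S` with
`A ‖f‖ ≤ √S ≤ B ‖f‖`. -/
def IsFrameWith {H : Type*} [NormedAddCommGroup H] [InnerProductSpace ℂ H]
    {J : Type*} (v : J → H) (A B : ℝ) : Prop :=
  ∀ f : H, ∃ S : ℝ, HasSum (fun j => ‖⟪f, v j⟫_ℂ‖ ^ 2) S ∧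
    A * ‖f‖ ≤ Real.sqrt S ∧ Real.sqrt S ≤ B * ‖f‖

/-- A family `v : J → H` is `ℓ²`-independent if for every square-summable scalar family
`c : J → ℂ` with `∑ j, c j • v j = 0` (as a convergent sum) one has `c = 0`. -/
def IsL2Indep {H : Type*} [NormedAddCommGroup H] [InnerProductSpace ℂ H]
    {J : Type*} (v : J → H) : Prop :=
  ∀ c : J → ℂ, Summable (fun j => ‖c j‖ ^ 2) →
    HasSum (fun j => c j • v j) 0 → ∀ j, c j = 0

section Frames

variable {H K : Type*} [NormedAddCommGroup H] [InnerProductSpace ℂ H]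
  [NormedAddCommGroup K] [InnerProductSpace ℂ K] {J : Type*}

theorem hasSum_ite_fst_eq_iff {ι α : Type*} [DecidableEq ι] [AddCommMonoid α]
    [TopologicalSpace α] (i : ι) {f : ι × J → α} {a : α} :
    HasSum (fun p => if p.1 = i then f p else 0) a ↔ HasSum (fun j => f (i, j)) a := by
  rw [← (Prod.mk_right_injective i).hasSum_iff fun p hp => if_neg fun h => hp ⟨p.2, by rw [← h]⟩]
  simp [Function.comp_def]

theorem hasSum_prod_of_fintype {ι α : Type*} [Fintype ι] [AddCommMonoid α] [TopologicalSpace α]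
    [ContinuousAdd α] {f : ι × J → α} {g : ι → α} (hf : ∀ i, HasSum (fun j => f (i, j)) (g i)) :
    HasSum f (∑ i, g i) := by
  classical
  simpa using hasSum_sum (s := Finset.univ) fun i _ => (hasSum_ite_fst_eq_iff i).mpr (hf i)

theorem isFrameWith_iff_sq {v : J → H} {A B : ℝ} (hA : 0 ≤ A) (hB : 0 ≤ B) :
    IsFrameWith v A B ↔ ∀ f : H, ∃ S : ℝ, HasSum (fun j => ‖⟪f, v j⟫_ℂ‖ ^ 2) S ∧
      A ^ 2 * ‖f‖ ^ 2 ≤ S ∧ S ≤ B ^ 2 * ‖f‖ ^ 2 := by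
  refine forall_congr' fun f => exists_congr fun S => and_congr_right fun hS => ?_
  have hS0 : 0 ≤ S := hS.nonneg fun _ => by positivity
  rw [Real.le_sqrt (by positivity) hS0, Real.sqrt_le_left (by positivity), mul_pow, mul_pow]

theorem IsFrameWith.mono {v : J → H} {A B A' B' : ℝ} (h : IsFrameWith v A B) (hA : A' ≤ A)
    (hB : B ≤ B') : IsFrameWith v A' B' := fun f =>
  let ⟨S, hS, hlow, hup⟩ := h f
  ⟨S, hS, (mul_le_mul_of_nonneg_right hA (norm_nonneg f)).trans hlow,
    hup.trans (mul_le_mul_of_nonneg_right hB (norm_nonneg f))⟩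

theorem exists_uniform_frame_bounds {ι : Type*} [Fintype ι] [Nonempty ι] {u : ι → J → H}
    (hu : ∀ i, ∃ A B : ℝ, 0 < A ∧ A ≤ B ∧ IsFrameWith (u i) A B) :
    ∃ A B : ℝ, 0 < A ∧ A ≤ B ∧ ∀ i, IsFrameWith (u i) A B := by
  choose A B hA hAB hu using hu
  obtain ⟨i₀⟩ := ‹Nonempty ι›
  have hinf : ∀ i, Finset.univ.inf' Finset.univ_nonempty A ≤ A i := fun i =>
    Finset.inf'_le A (Finset.mem_univ i)
  have hsup : ∀ i, B i ≤ Finset.univ.sup' Finset.univ_nonempty B := fun i =>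
    Finset.le_sup' B (Finset.mem_univ i)
  exact ⟨_, _, (Finset.lt_inf'_iff _).mpr fun i _ => hA i,
    (hinf i₀).trans ((hAB i₀).trans (hsup i₀)), fun i => (hu i).mono (hinf i) (hsup i)⟩

theorem isFrameWith_comp_equiv_iff {J' : Type*} (e : J' ≃ J) {v : J → H} {A B : ℝ} :
    IsFrameWith (v ∘ e) A B ↔ IsFrameWith v A B :=
  forall_congr' fun f => exists_congr fun S => by
    rw [← e.hasSum_iff]
    rfl

theorem IsL2Indep.of_comp_equiv {J' : Type*} (e : J' ≃ J) {v : J → H} (h : IsL2Indep (v ∘ e)) :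
    IsL2Indep v := fun c hc hsum j => by
  simpa using h (c ∘ e) (hc.comp_injective e.injective) (e.hasSum_iff.mpr hsum) (e.symm j)

theorem IsFrameWith.of_sum_sq_norm_eq {ι : Type*} [Fintype ι] (P : ι → H → K)
    (hP : ∀ f, ∑ i, ‖P i f‖ ^ 2 = ‖f‖ ^ 2) {u : ι → J → K} {v : ι × J → H}
    (hv : ∀ f i j, ⟪f, v (i, j)⟫_ℂ = ⟪P i f, u i j⟫_ℂ) {A B : ℝ} (hA : 0 ≤ A) (hB : 0 ≤ B)
    (hu : ∀ i, IsFrameWith (u i) A B) : IsFrameWith v A B := by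
  simp only [isFrameWith_iff_sq hA hB] at hu ⊢
  intro f
  choose S hS hlow hup using fun i => hu i (P i f)
  refine ⟨∑ i, S i, hasSum_prod_of_fintype fun i => by simpa only [hv] using hS i, ?_, ?_⟩
  · rw [← hP, Finset.mul_sum]
    exact Finset.sum_le_sum fun i _ => hlow i
  · rw [← hP, Finset.mul_sum]
    exact Finset.sum_le_sum fun i _ => hup i

theorem IsL2Indep.of_proj {ι : Type*} [DecidableEq ι] (P : ι → H →L[ℂ] K) {u : ι → J → K}
    {v : ι × J → H} (hPv : ∀ i i' j, P i (v (i', j)) = if i' = i then u i' j else 0)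
    (hu : ∀ i, IsL2Indep (u i)) : IsL2Indep v := by
  rintro c hc hsum ⟨i, j⟩
  have hproj : HasSum (fun p : ι × J => if p.1 = i then c p • u p.1 p.2 else 0) 0 := by
    simpa [hPv, apply_ite] using (P i).hasSum hsum
  have hfiber : HasSum (fun m => c (i, m) • u i m) 0 := (hasSum_ite_fst_eq_iff i).mp hproj
  exact hu i _ (hc.comp_injective (Prod.mk_right_injective i)) hfiber j

end Frames

namespace MeasureTheory.L2

variable {α E : Type*} {m : MeasurableSpace α} {μ : Measure α}
  [NormedAddCommGroup E] [InnerProductSpace ℂ E]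

theorem norm_sq_eq_integral_norm_sq (f : Lp E 2 μ) : ‖f‖ ^ 2 = ∫ a, ‖f a‖ ^ 2 ∂μ := by
  rw [← inner_self_eq_norm_sq (𝕜 := ℂ), inner_def, ← integral_re (integrable_inner f f)]
  exact integral_congr_ae (.of_forall fun _ => inner_self_eq_norm_sq (𝕜 := ℂ) _)

theorem integrable_norm_sq (f : Lp E 2 μ) : Integrable (fun a => ‖f a‖ ^ 2) μ :=
  (integrable_inner (𝕜 := ℂ) f f).re.congr (.of_forall fun _ => inner_self_eq_norm_sq (𝕜 := ℂ) _)

noncomputable def smulVec (v : E) : Lp ℂ 2 μ →L[ℂ] Lp E 2 μ :=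
  ContinuousLinearMap.compLpL 2 μ (ContinuousLinearMap.toSpanSingleton ℂ v)

noncomputable def innerVec (v : E) : Lp E 2 μ →L[ℂ] Lp ℂ 2 μ :=
  ContinuousLinearMap.compLpL 2 μ (innerSL ℂ v)

theorem coeFn_smulVec (v : E) (g : Lp ℂ 2 μ) : smulVec v g =ᵐ[μ] fun a => g a • v := by
  filter_upwards [ContinuousLinearMap.coeFn_compLpL (p := 2) (μ := μ)
    (ContinuousLinearMap.toSpanSingleton ℂ v) g] with a ha
  rw [smulVec, ha, ContinuousLinearMap.toSpanSingleton_apply]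

theorem coeFn_innerVec (v : E) (f : Lp E 2 μ) : innerVec v f =ᵐ[μ] fun a => ⟪v, f a⟫_ℂ := by
  filter_upwards [ContinuousLinearMap.coeFn_compLpL (p := 2) (μ := μ) (innerSL ℂ v) f] with a ha
  rw [innerVec, ha, innerSL_apply_apply]

theorem inner_smulVec (v : E) (f : Lp E 2 μ) (g : Lp ℂ 2 μ) :
    ⟪f, smulVec v g⟫_ℂ = ⟪innerVec v f, g⟫_ℂ := by
  rw [inner_def, inner_def]
  refine integral_congr_ae ?_
  filter_upwards [coeFn_smulVec v g, coeFn_innerVec v f] with a h1 h2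
  rw [h1, h2, inner_smul_right, RCLike.inner_apply, ← inner_conj_symm]

theorem innerVec_smulVec (w v : E) (g : Lp ℂ 2 μ) :
    innerVec w (smulVec v g) = ⟪w, v⟫_ℂ • g := by
  refine Lp.ext ?_
  filter_upwards [coeFn_innerVec w (smulVec v g), coeFn_smulVec v g, Lp.coeFn_smul ⟪w, v⟫_ℂ g]
    with a h1 h2 h3
  rw [h1, h2, h3, inner_smul_right, Pi.smul_apply, smul_eq_mul, mul_comm]

theorem sum_norm_innerVec_sq {ι : Type*} [Fintype ι] (b : OrthonormalBasis ι ℂ E)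
    (f : Lp E 2 μ) : ∑ i, ‖innerVec (b i) f‖ ^ 2 = ‖f‖ ^ 2 := by
  have hcoeff : ∀ᵐ a ∂μ, ∀ i, innerVec (b i) f a = ⟪b i, f a⟫_ℂ :=
    ae_all_iff.mpr fun i => coeFn_innerVec (b i) f
  calc ∑ i, ‖innerVec (b i) f‖ ^ 2
      = ∑ i, ∫ a, ‖innerVec (b i) f a‖ ^ 2 ∂μ := by simp only [norm_sq_eq_integral_norm_sq]
    _ = ∫ a, ∑ i, ‖innerVec (b i) f a‖ ^ 2 ∂μ :=
        (integral_finsetSum _ fun i _ => integrable_norm_sq _).symm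
    _ = ∫ a, ‖f a‖ ^ 2 ∂μ := integral_congr_ae <| hcoeff.mono fun a ha => by
        simp only [ha, b.sum_sq_norm_inner_right]
    _ = ‖f‖ ^ 2 := (norm_sq_eq_integral_norm_sq f).symm

end MeasureTheory.L2

open L2 in
/-- Theorem 6.7. Write each `j ∈ ℤ` as `j = n m + l` with `l ∈ Fin n`.
If for every `l` the normalized exponentials `E m l` with frequencies `x (n m + l)` form a
frame for `L²([-π, π])`, `η` is an orthonormal family (the columns of a unitary matrix) in
`ℂⁿ`, `ξ (n m + l) := η l`, and `V j ∈ L²([-π, π], ℂⁿ)` is the vector-valued exponential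
`t ↦ (2π)^{-1/2} e^{i x_j t} ξ j`, then `(V j)_{j ∈ ℤ}` is a frame for `L²([-π, π], ℂⁿ)`;
moreover if each family `(E m l)_m` is `ℓ²`-independent (a Riesz basis), then so is
`(V j)_{j ∈ ℤ}` (a Riesz basis). -/
theorem statement15 (n : ℕ) (hn : 0 < n) (x : ℤ → ℝ)
    (E : ℤ → Fin n → Lp ℂ 2 muPi)
    (hE : ∀ (m : ℤ) (l : Fin n), (E m l : ℝ → ℂ) =ᵐ[muPi] fun t =>
      ((Real.sqrt (2 * Real.pi))⁻¹ : ℂ) *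
        Complex.exp (Complex.I * (x ((n : ℤ) * m + ((l : ℕ) : ℤ)) : ℂ) * (t : ℂ)))
    (η : Fin n → EuclideanSpace ℂ (Fin n)) (hη : Orthonormal ℂ η)
    (ξ : ℤ → EuclideanSpace ℂ (Fin n))
    (hξ : ∀ (m : ℤ) (l : Fin n), ξ ((n : ℤ) * m + ((l : ℕ) : ℤ)) = η l)
    (V : ℤ → Lp (EuclideanSpace ℂ (Fin n)) 2 muPi)
    (hV : ∀ j : ℤ, (V j : ℝ → EuclideanSpace ℂ (Fin n)) =ᵐ[muPi] fun t =>
      (((Real.sqrt (2 * Real.pi))⁻¹ : ℂ) *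
        Complex.exp (Complex.I * (x j : ℂ) * (t : ℂ))) • ξ j)
    (hframe : ∀ l : Fin n, ∃ A B : ℝ, 0 < A ∧ A ≤ B ∧
      IsFrameWith (fun m : ℤ => E m l) A B) :
    (∃ A B : ℝ, 0 < A ∧ A ≤ B ∧ IsFrameWith V A B) ∧
    ((∀ l : Fin n, IsL2Indep (fun m : ℤ => E m l)) → IsL2Indep V) := by
  have : NeZero n := ⟨hn.ne'⟩
  let b : OrthonormalBasis (Fin n) ℂ (EuclideanSpace ℂ (Fin n)) :=
    .mk hη (hη.linearIndependent.span_eq_top_of_card_eq_finrank' (by simp)).ge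
  let e : Fin n × ℤ ≃ ℤ := (Equiv.prodComm _ _).trans (Int.divModEquiv n).symm
  have hVe : ∀ l m, V (e (l, m)) = smulVec (η l) (E m l) := fun l m => by
    have hj : e (l, m) = (n : ℤ) * m + ((l : ℕ) : ℤ) := by simp [e, mul_comm]
    refine Lp.ext ?_
    filter_upwards [hV (e (l, m)), hE m l, coeFn_smulVec (η l) (E m l)] with t h1 h2 h3
    rw [h1, h3, h2, hj, hξ]
  refine ⟨?_, fun hind => ?_⟩
  · obtain ⟨A, B, hA, hAB, hu⟩ := exists_uniform_frame_bounds hframe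
    refine ⟨A, B, hA, hAB, (isFrameWith_comp_equiv_iff e).mp ?_⟩
    refine IsFrameWith.of_sum_sq_norm_eq (fun l => innerVec (η l)) ?_ (u := fun l m => E m l)
      (fun f l m => ?_) hA.le (hA.le.trans hAB) hu
    · simpa only [b, OrthonormalBasis.coe_mk] using sum_norm_innerVec_sq b
    · rw [Function.comp_apply, hVe, inner_smulVec]
  · refine IsL2Indep.of_comp_equiv e (IsL2Indep.of_proj (fun l => innerVec (η l)) ?_ hind)
    intro l l' m
    rw [Function.comp_apply, hVe, innerVec_smulVec, orthonormal_iff_ite.mp hη, ite_smul, one_smul,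
      zero_smul]
    exact if_congr eq_comm rfl rfl
end

section
/- Let H and Y be complex Hilbert spaces, J a countable index set, and L_j : H → Y, j ∈ J, bounded linear operators. Assume there exists c > 0 such that for every square-summable family (ξ_j)_{j∈J} ∈ ℓ²(J, Y) with ∑_{j∈J} ‖ξ_j‖² = 1, the family ((L_j)†(ξ_j))_{j∈J} is summable in H with ‖∑_{j∈J} (L_j)†(ξ_j)‖_H ≤ c. Then: (i) the sampling operator I : H → ℓ²(J, Y), f ↦ (L_j(f))_{j∈J}, is well defined and bounded with ‖I(f)‖_{ℓ²(J,Y)} ≤ c‖f‖_H for all f ∈ H; (ii) for every λ > 0 the operator λ·id_H + I† ∘ I is coercive (⟨(λ + I†I)f, f⟩ ≥ λ‖f‖² for all f), hence bijective with bounded inverse; and (iii) there exists c′ > 0 such that ‖(λ·id_H + I†I)⁻¹(I†(ξ))‖_H ≤ c′‖ξ‖_{ℓ²(J,Y)} for all ξ ∈ ℓ²(J, Y); consequently ‖(λ + I†I)⁻¹ I† (I f)‖_H ≤ c c′ ‖f‖_H for all f ∈ H. -/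
open scoped InnerProductSpace ComplexOrder ENNReal

/-!
Testing the hypothesis on the normalisation of `(L j f)_{j ∈ s}`, `s` finite, gives
`∑_{j ∈ s} ‖L j f‖² = Re ⟪f, ∑_{j ∈ s} (L j)† (L j f)⟫ ≤ c ‖f‖ (∑_{j ∈ s} ‖L j f‖²)^(1/2)`,
so `f ↦ (L j f)_j` is a bounded operator `I` into `ℓ²` with `‖I‖ ≤ c`, and `‖I†‖ = ‖I‖`.
Since `Re ⟪(λ + I†I) f, f⟫ = λ‖f‖² + ‖I f‖²`, the operator `λ + I†I` is coercive, hence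
bounded below by `λ`: it is injective with closed range, and a vector orthogonal to its range
is orthogonal to its own image, hence zero. So it is invertible with inverse of norm `≤ λ⁻¹`,
and one may take `c' = c / λ`.
-/

section Sampling

variable {𝕜 E J : Type*} {F : J → Type*} [NontriviallyNormedField 𝕜] [NormedAddCommGroup E]
  [NormedSpace 𝕜 E] [∀ j, NormedAddCommGroup (F j)] [∀ j, NormedSpace 𝕜 (F j)]
  {p : ℝ≥0∞} [Fact (1 ≤ p)] {C : ℝ}

noncomputable def lpSampling (hp : 0 < p.toReal) (hC : 0 ≤ C) (L : ∀ j, E →L[𝕜] F j)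
    (hL : ∀ f (s : Finset J), ∑ j ∈ s, ‖L j f‖ ^ p.toReal ≤ (C * ‖f‖) ^ p.toReal) :
    E →L[𝕜] lp F p :=
  LinearMap.mkContinuous
    { toFun := fun f => ⟨fun j => L j f, memℓp_gen' (hL f)⟩
      map_add' := fun f g => lp.ext <| funext fun j => map_add (L j) f g
      map_smul' := fun a f => lp.ext <| funext fun j => map_smul (L j) a f }
    C fun f => lp.norm_le_of_forall_sum_le hp (by positivity) (hL f)

theorem norm_lpSampling_le (hp : 0 < p.toReal) (hC : 0 ≤ C) (L : ∀ j, E →L[𝕜] F j)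
    (hL : ∀ f (s : Finset J), ∑ j ∈ s, ‖L j f‖ ^ p.toReal ≤ (C * ‖f‖) ^ p.toReal) :
    ‖lpSampling hp hC L hL‖ ≤ C :=
  LinearMap.mkContinuous_norm_le _ hC _

end Sampling

section AdjointBound

open ContinuousLinearMap

variable {𝕜 H Y J : Type*} [RCLike 𝕜] [NormedAddCommGroup H] [InnerProductSpace 𝕜 H]
  [NormedAddCommGroup Y] [InnerProductSpace 𝕜 Y] [CompleteSpace H] [CompleteSpace Y]
  {L : J → H →L[𝕜] Y} {c : ℝ}

theorem norm_sum_adjoint_apply_le (hyp : ∀ ξ : J → Y, Summable (fun j => ‖ξ j‖ ^ 2) →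
      ∑' j, ‖ξ j‖ ^ 2 = 1 → ‖∑' j, adjoint (L j) (ξ j)‖ ≤ c)
    (s : Finset J) (ξ : J → Y) :
    ‖∑ j ∈ s, adjoint (L j) (ξ j)‖ ≤ c * √(∑ j ∈ s, ‖ξ j‖ ^ 2) := by
  classical
  set q := ∑ j ∈ s, ‖ξ j‖ ^ 2
  rcases (show 0 ≤ q by positivity).eq_or_lt with hq | hq
  · have hξ : ∀ j ∈ s, ξ j = 0 := by
      simpa using (Finset.sum_eq_zero_iff_of_nonneg fun j _ => sq_nonneg ‖ξ j‖).1 hq.symm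
    rw [Finset.sum_eq_zero fun j hj => by rw [hξ j hj, map_zero]]
    simp [← hq]
  set r := √q
  have hr : 0 < r := Real.sqrt_pos.2 hq
  let η : J → Y := fun j => if j ∈ s then (r⁻¹ : 𝕜) • ξ j else 0
  have hη : ∀ j ∉ s, η j = 0 := fun j hj => if_neg hj
  have hη_norm : ∑ j ∈ s, ‖η j‖ ^ 2 = 1 := calc
    ∑ j ∈ s, ‖η j‖ ^ 2 = r⁻¹ ^ 2 * q := by
        rw [Finset.mul_sum]
        refine Finset.sum_congr rfl fun j hj => ?_
        simp [η, hj, norm_smul, mul_pow]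
    _ = 1 := by rw [inv_pow, Real.sq_sqrt hq.le, inv_mul_cancel₀ hq.ne']
  have h := hyp η (summable_of_ne_finset_zero (s := s) fun j hj => by simp [hη j hj])
    (by rwa [tsum_eq_sum fun j hj => by simp [hη j hj]])
  have hsum : ∑ j ∈ s, adjoint (L j) (η j) = (r⁻¹ : 𝕜) • ∑ j ∈ s, adjoint (L j) (ξ j) := by
    rw [Finset.smul_sum]
    exact Finset.sum_congr rfl fun j hj => by simp [η, hj]
  rwa [tsum_eq_sum fun j hj => by simp [hη j hj], hsum, norm_smul, norm_inv, RCLike.norm_ofReal,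
    abs_of_pos hr, inv_mul_le_iff₀ hr, mul_comm] at h

theorem sum_norm_sq_apply_le (hyp : ∀ ξ : J → Y, Summable (fun j => ‖ξ j‖ ^ 2) →
      ∑' j, ‖ξ j‖ ^ 2 = 1 → ‖∑' j, adjoint (L j) (ξ j)‖ ≤ c)
    (f : H) (s : Finset J) : ∑ j ∈ s, ‖L j f‖ ^ 2 ≤ (c * ‖f‖) ^ 2 := by
  set q := ∑ j ∈ s, ‖L j f‖ ^ 2
  have hq : √q ^ 2 = q := Real.sq_sqrt (by positivity)
  have hle : √q ^ 2 ≤ c * ‖f‖ * √q := calc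
    √q ^ 2 = RCLike.re ⟪f, ∑ j ∈ s, adjoint (L j) (L j f)⟫_𝕜 := by
        simp [hq, q, inner_sum, adjoint_inner_right]
    _ ≤ ‖f‖ * ‖∑ j ∈ s, adjoint (L j) (L j f)‖ := re_inner_le_norm _ _
    _ ≤ ‖f‖ * (c * √q) := by gcongr; exact norm_sum_adjoint_apply_le hyp s _
    _ = c * ‖f‖ * √q := by ring
  rw [← hq]
  rcases (Real.sqrt_nonneg q).eq_or_lt with h0 | hpos
  · rw [← h0, sq, zero_mul]
    positivity
  · have : √q ≤ c * ‖f‖ := le_of_mul_le_mul_right (by nlinarith) hpos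
    gcongr

end AdjointBound

namespace ContinuousLinearMap

section Coercive

variable {𝕜 E : Type*} [RCLike 𝕜] [NormedAddCommGroup E] [InnerProductSpace 𝕜 E]
  {T : E →L[𝕜] E} {lam : ℝ}

theorem mul_norm_le_norm_apply_of_coercive (hT : ∀ f, lam * ‖f‖ ^ 2 ≤ RCLike.re ⟪T f, f⟫_𝕜)
    (f : E) : lam * ‖f‖ ≤ ‖T f‖ := by
  rcases (norm_nonneg f).eq_or_lt with hf | hf
  · simp [← hf]
  · refine le_of_mul_le_mul_right ?_ hf
    calc lam * ‖f‖ * ‖f‖ = lam * ‖f‖ ^ 2 := by ring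
      _ ≤ RCLike.re ⟪T f, f⟫_𝕜 := hT f
      _ ≤ ‖T f‖ * ‖f‖ := re_inner_le_norm _ _

variable [CompleteSpace E]

theorem range_eq_top_of_coercive (hlam : 0 < lam)
    (hT : ∀ f, lam * ‖f‖ ^ 2 ≤ RCLike.re ⟪T f, f⟫_𝕜) : T.range = ⊤ := by
  have hanti : AntilipschitzWith lam⁻¹.toNNReal T :=
    T.antilipschitz_of_bound fun f => by
      rw [Real.coe_toNNReal _ (inv_nonneg.2 hlam.le), inv_mul_eq_div, le_div_iff₀' hlam]
      exact mul_norm_le_norm_apply_of_coercive hT f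
  have : IsClosed (T.range : Set E) := by
    rw [LinearMap.coe_range]
    exact hanti.isClosed_range T.uniformContinuous
  have : CompleteSpace T.range := this.completeSpace_coe
  refine Submodule.orthogonal_eq_bot_iff.1 ((Submodule.eq_bot_iff _).2 fun g hg => ?_)
  have hTg : ⟪T g, g⟫_𝕜 = 0 := hg (T g) (LinearMap.mem_range_self _ g)
  have : ‖g‖ ^ 2 ≤ 0 := nonpos_of_mul_nonpos_right (by simpa [hTg] using hT g) hlam
  simpa using this

theorem exists_inverse_of_coercive (hlam : 0 < lam)
    (hT : ∀ f, lam * ‖f‖ ^ 2 ≤ RCLike.re ⟪T f, f⟫_𝕜) :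
    ∃ S : E →L[𝕜] E, S.comp T = ContinuousLinearMap.id 𝕜 E ∧
      T.comp S = ContinuousLinearMap.id 𝕜 E ∧ ∀ y, ‖S y‖ ≤ lam⁻¹ * ‖y‖ := by
  have hker : T.ker = ⊥ := LinearMap.ker_eq_bot'.2 fun f hf => by
    have h := mul_norm_le_norm_apply_of_coercive hT f
    rw [show T f = 0 from hf, norm_zero] at h
    exact norm_le_zero_iff.1 (nonpos_of_mul_nonpos_right h hlam)
  let e := ContinuousLinearEquiv.ofBijective T hker (range_eq_top_of_coercive hlam hT)
  refine ⟨e.symm, ext e.symm_apply_apply, ext e.apply_symm_apply, fun y => ?_⟩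
  have h := mul_norm_le_norm_apply_of_coercive hT (e.symm y)
  rwa [show T (e.symm y) = y from e.apply_symm_apply y, ← le_div_iff₀' hlam,
    ← inv_mul_eq_div] at h

end Coercive

theorem inner_smul_id_add_adjoint_comp_self_apply {𝕜 E F : Type*} [RCLike 𝕜]
    [NormedAddCommGroup E] [InnerProductSpace 𝕜 E] [NormedAddCommGroup F]
    [InnerProductSpace 𝕜 F] [CompleteSpace E] [CompleteSpace F] (A : E →L[𝕜] F) (lam : ℝ)
    (f : E) :
    ⟪((lam : 𝕜) • ContinuousLinearMap.id 𝕜 E + (adjoint A).comp A) f, f⟫_𝕜 =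
      ((lam * ‖f‖ ^ 2 + ‖A f‖ ^ 2 : ℝ) : 𝕜) := by
  simp [inner_add_left, inner_smul_left, adjoint_inner_left, inner_self_eq_norm_sq_to_K]

end ContinuousLinearMap

theorem statement19_general {H Y : Type*}
    [NormedAddCommGroup H] [InnerProductSpace ℂ H] [CompleteSpace H]
    [NormedAddCommGroup Y] [InnerProductSpace ℂ Y] [CompleteSpace Y]
    {J : Type*} (L : J → H →L[ℂ] Y) (c : ℝ) (hc : 0 < c)
    (hyp : ∀ ξ : J → Y, Summable (fun j => ‖ξ j‖ ^ 2) → (∑' j, ‖ξ j‖ ^ 2) = 1 →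
      Summable (fun j => ContinuousLinearMap.adjoint (L j) (ξ j)) ∧
      ‖∑' j, ContinuousLinearMap.adjoint (L j) (ξ j)‖ ≤ c) :
    ∃ I : H →L[ℂ] lp (fun _ : J => Y) 2,
      (∀ (f : H) (j : J), I f j = L j f) ∧
      (∀ f : H, ‖I f‖ ≤ c * ‖f‖) ∧
      ∀ lam : ℝ, 0 < lam →
        (∀ f : H, ((lam * ‖f‖ ^ 2 : ℝ) : ℂ) ≤
          ⟪((lam : ℂ) • ContinuousLinearMap.id ℂ H
              + (ContinuousLinearMap.adjoint I).comp I) f, f⟫_ℂ) ∧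
        ∃ S : H →L[ℂ] H,
          S.comp ((lam : ℂ) • ContinuousLinearMap.id ℂ H
              + (ContinuousLinearMap.adjoint I).comp I) = ContinuousLinearMap.id ℂ H ∧
          ((lam : ℂ) • ContinuousLinearMap.id ℂ H
              + (ContinuousLinearMap.adjoint I).comp I).comp S = ContinuousLinearMap.id ℂ H ∧
          ∃ c' : ℝ, 0 < c' ∧
            (∀ ξ : lp (fun _ : J => Y) 2,
              ‖S (ContinuousLinearMap.adjoint I ξ)‖ ≤ c' * ‖ξ‖) ∧
            (∀ f : H, ‖S (ContinuousLinearMap.adjoint I (I f))‖ ≤ c * c' * ‖f‖) := by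
  have hL : ∀ f (s : Finset J),
      ∑ j ∈ s, ‖L j f‖ ^ (2 : ℝ≥0∞).toReal ≤ (c * ‖f‖) ^ (2 : ℝ≥0∞).toReal := by
    simpa only [ENNReal.toReal_ofNat, Real.rpow_two]
      using sum_norm_sq_apply_le fun ξ h₁ h₂ => (hyp ξ h₁ h₂).2
  set I := lpSampling (by norm_num) hc.le L hL
  have hI : ‖I‖ ≤ c := norm_lpSampling_le ..
  have hI_adj : ‖ContinuousLinearMap.adjoint I‖ ≤ c :=
    (ContinuousLinearMap.adjoint.norm_map I).trans_le hI
  refine ⟨I, fun f j => rfl, I.le_of_opNorm_le hI, fun lam hlam => ?_⟩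
  have hT (f : H) : ⟪((lam : ℂ) • ContinuousLinearMap.id ℂ H
      + (ContinuousLinearMap.adjoint I).comp I) f, f⟫_ℂ = ((lam * ‖f‖ ^ 2 + ‖I f‖ ^ 2 : ℝ) : ℂ) :=
    ContinuousLinearMap.inner_smul_id_add_adjoint_comp_self_apply I lam f
  have hcoer (f : H) : lam * ‖f‖ ^ 2 ≤ lam * ‖f‖ ^ 2 + ‖I f‖ ^ 2 :=
    le_add_of_nonneg_right (sq_nonneg _)
  obtain ⟨S, hST, hTS, hS⟩ := ContinuousLinearMap.exists_inverse_of_coercive hlam fun f => by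
    rw [hT f, RCLike.re_to_complex, Complex.ofReal_re]
    exact hcoer f
  have hSI (ξ : lp (fun _ : J => Y) 2) : ‖S (ContinuousLinearMap.adjoint I ξ)‖ ≤ c / lam * ‖ξ‖ :=
    calc ‖S (ContinuousLinearMap.adjoint I ξ)‖
        ≤ lam⁻¹ * ‖ContinuousLinearMap.adjoint I ξ‖ := hS _
      _ ≤ lam⁻¹ * (c * ‖ξ‖) := by
          gcongr; exact (ContinuousLinearMap.adjoint I).le_of_opNorm_le hI_adj ξ
      _ = c / lam * ‖ξ‖ := by ring
  refine ⟨fun f => by rw [hT f, Complex.real_le_real]; exact hcoer f,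
    S, hST, hTS, c / lam, div_pos hc hlam, hSI, fun f => ?_⟩
  calc ‖S (ContinuousLinearMap.adjoint I (I f))‖ ≤ c / lam * ‖I f‖ := hSI (I f)
    _ ≤ c / lam * (c * ‖f‖) := by gcongr; exact I.le_of_opNorm_le hI f
    _ = c * (c / lam) * ‖f‖ := by ring

/-- Theorem 8.3, stability of Tikhonov reconstruction. Let
`L j : H → Y`, `j ∈ J` (J countable), be bounded operators such that for every unit-norm
square-summable family `(ξ j)` the family `((L j)† (ξ j))` is summable with
`‖∑ j, (L j)† (ξ j)‖ ≤ c`. Then (i) the sampling operator `I f := (L j f)_j` is a well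
defined bounded operator `H → ℓ²(J, Y)` with `‖I f‖ ≤ c ‖f‖`; (ii) for every `λ > 0` the
operator `λ • id + I† ∘ I` is coercive, hence bijective with bounded inverse `S`; and
(iii) there is `c' > 0` with `‖S (I† ξ)‖ ≤ c' ‖ξ‖` for all `ξ`, whence
`‖S (I† (I f))‖ ≤ c c' ‖f‖` for all `f`. -/
theorem statement19 {H Y : Type*}
    [NormedAddCommGroup H] [InnerProductSpace ℂ H] [CompleteSpace H]
    [NormedAddCommGroup Y] [InnerProductSpace ℂ Y] [CompleteSpace Y]
    {J : Type*} [Countable J] (L : J → H →L[ℂ] Y) (c : ℝ) (hc : 0 < c)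
    (hyp : ∀ ξ : J → Y, Summable (fun j => ‖ξ j‖ ^ 2) → (∑' j, ‖ξ j‖ ^ 2) = 1 →
      Summable (fun j => ContinuousLinearMap.adjoint (L j) (ξ j)) ∧
      ‖∑' j, ContinuousLinearMap.adjoint (L j) (ξ j)‖ ≤ c) :
    ∃ I : H →L[ℂ] lp (fun _ : J => Y) 2,
      (∀ (f : H) (j : J), I f j = L j f) ∧
      (∀ f : H, ‖I f‖ ≤ c * ‖f‖) ∧
      ∀ lam : ℝ, 0 < lam →
        (∀ f : H, ((lam * ‖f‖ ^ 2 : ℝ) : ℂ) ≤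
          ⟪((lam : ℂ) • ContinuousLinearMap.id ℂ H
              + (ContinuousLinearMap.adjoint I).comp I) f, f⟫_ℂ) ∧
        ∃ S : H →L[ℂ] H,
          S.comp ((lam : ℂ) • ContinuousLinearMap.id ℂ H
              + (ContinuousLinearMap.adjoint I).comp I) = ContinuousLinearMap.id ℂ H ∧
          ((lam : ℂ) • ContinuousLinearMap.id ℂ H
              + (ContinuousLinearMap.adjoint I).comp I).comp S = ContinuousLinearMap.id ℂ H ∧
          ∃ c' : ℝ, 0 < c' ∧
            (∀ ξ : lp (fun _ : J => Y) 2,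
              ‖S (ContinuousLinearMap.adjoint I ξ)‖ ≤ c' * ‖ξ‖) ∧
            (∀ f : H, ‖S (ContinuousLinearMap.adjoint I (I f))‖ ≤ c * c' * ‖f‖) :=
  statement19_general L c hc hyp
end
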